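/- Let d ≥ 1 be a fixed integer and let f(n) be a sequence of positive numbers with n^{0.6} ≤ f(n) and f(n) = o(n^{2/3}). Then |Ṽ_f^d| ~ N^d as n → ∞ over multiples of 4; that is, the number of d-tuples of vertices (v^1, …, v^d) ∈ V^d satisfying |x_j(v^1, …, v^d)| ≤ f(n) for all j ∈ {1, …, 2^d} is asymptotically equal to N^d. -/

import Mathlib

open MeasureTheory Filter Asymptotics

/-- Vertices of the complete distance graph `G(n, n/2, n/4)`: 0/1-vectors of length `n`
(encoded as the set of coordinates equal to 1) with exactly `n/2` ones. -/
def DV (n : ℕ) : Type := {s : Finset (Fin n) // s.card = n / 2}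

instance (n : ℕ) : Fintype (DV n) := by unfold DV; infer_instance
instance (n : ℕ) : DecidableEq (DV n) := by unfold DV; infer_instance

/-- The complete distance graph: two vertices are adjacent iff their Euclidean inner
product (= cardinality of the intersection of the corresponding sets) equals `n/4`. -/
def distGraph (n : ℕ) : SimpleGraph (DV n) where
  Adj x y := x ≠ y ∧ (x.1 ∩ y.1).card = n / 4
  symm := ⟨fun x y h => ⟨h.1.symm, by rw [Finset.inter_comm]; exact h.2⟩⟩
  loopless := ⟨fun x h => h.1 rfl⟩

/-- `N = C(n, n/2)`, the number of vertices of the distance graph. -/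
def NN (n : ℕ) : ℕ := n.choose (n / 2)

/-- `N₁ = C(n/2, n/4)²`, the common degree of the vertices of the distance graph. -/
def NN1 (n : ℕ) : ℕ := ((n / 2).choose (n / 4)) ^ 2

/-- Bernoulli measure on `Bool` with parameter `p` (clipped to `[0,1]`). -/
noncomputable def bern (p : ℝ) : Measure Bool :=
  (PMF.bernoulli (min (Real.toNNReal p) 1) (min_le_right _ _)).toMeasure

instance (p : ℝ) : SigmaFinite (bern p) := by unfold bern; infer_instance

/-- The law of the random distance graph `G_p`: each (potential) edge is kept
independently with probability `p`. -/
noncomputable def gpMeasure (n : ℕ) (p : ℝ) : Measure (Sym2 (DV n) → Bool) :=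
  Measure.pi fun _ => bern p

/-- The random spanning subgraph of the distance graph determined by the coin flips `ω`. -/
def randSubgraph (n : ℕ) (ω : Sym2 (DV n) → Bool) : SimpleGraph (DV n) where
  Adj x y := (distGraph n).Adj x y ∧ ω s(x, y) = true
  symm := ⟨fun x y h => ⟨(distGraph n).symm.symm _ _ h.1, by rw [Sym2.eq_swap]; exact h.2⟩⟩
  loopless := ⟨fun x h => (distGraph n).loopless.irrefl x h.1⟩

/-- `G` contains a subgraph isomorphic to `F` (a copy of `F`). -/
def ContainsCopy {α β : Type} (F : SimpleGraph α) (G : SimpleGraph β) : Prop :=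
  ∃ f : α → β, Function.Injective f ∧ ∀ ⦃a b⦄, F.Adj a b → G.Adj (f a) (f b)

/-- `X_F`: the number of subgraphs of `G` isomorphic to `F`. -/
noncomputable def copyCount {α β : Type} (F : SimpleGraph α) (G : SimpleGraph β) : ℕ :=
  Nat.card {H : G.Subgraph // Nonempty (F ≃g H.coe)}

/-- The number of monomorphisms (injective graph homomorphisms) of `F` into `G`. -/
noncomputable def monoCount {α β : Type} (F : SimpleGraph α) (G : SimpleGraph β) : ℕ :=
  Nat.card {f : α → β // Function.Injective f ∧ ∀ ⦃a b⦄, F.Adj a b → G.Adj (f a) (f b)}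

/-- Maximal density `ρ^max(F)`: the maximum of `e(H)/v(H)` over nonempty subgraphs `H ⊆ F`. -/
noncomputable def rhoMax {α : Type} [Fintype α] (F : SimpleGraph α) : ℝ :=
  ⨆ H : {H : F.Subgraph // H.verts.Nonempty},
    (H.1.edgeSet.ncard : ℝ) / (H.1.verts.ncard : ℝ)

/-- `F` is strictly balanced: `e(H)/v(H) < e(F)/v(F)` for every proper nonempty subgraph. -/
def StrictlyBalanced {α : Type} [Fintype α] (F : SimpleGraph α) : Prop :=
  ∀ H : F.Subgraph, H.verts.Nonempty → H ≠ ⊤ →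
    H.edgeSet.ncard * Fintype.card α < F.edgeSet.ncard * H.verts.ncard

/-- Number of edges of `H` lying inside `S` with at least one non-root endpoint.
Roots are the vertices `Sum.inl i`, non-roots the vertices `Sum.inr j`. -/
noncomputable def netEdgeCount {d k : ℕ} (H : SimpleGraph (Fin d ⊕ Fin k))
    (S : Set (Fin d ⊕ Fin k)) : ℕ :=
  {e ∈ H.edgeSet | (∀ v ∈ e, v ∈ S) ∧ ∃ v ∈ e, Sum.isRight v = true}.ncard

/-- The network `(R, H)` (roots = `Sum.inl` vertices) is strictly balanced:
`ρ(R, H|_S) < ρ(R, H)` for every proper subnetwork `(R, H|_S)`, `R ⊆ S ⊊ V(H)`. -/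
def StrictlyBalancedNet {d k : ℕ} (H : SimpleGraph (Fin d ⊕ Fin k)) : Prop :=
  ∀ S : Set (Fin d ⊕ Fin k), (∀ i, Sum.inl i ∈ S) → S ≠ Set.univ → (∃ j, Sum.inr j ∈ S) →
    netEdgeCount H S * k < netEdgeCount H Set.univ * (S ∩ Set.range Sum.inr).ncard

/-- The network `(R, H)` is nontrivial: every root is adjacent to a non-root vertex. -/
def NontrivialNet {d k : ℕ} (H : SimpleGraph (Fin d ⊕ Fin k)) : Prop :=
  ∀ i : Fin d, ∃ j : Fin k, H.Adj (Sum.inl i) (Sum.inr j)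

/-- The quantities `x_j` associated with a `d`-tuple of vertices, indexed by the bit
pattern `δ` (`B_δ` = set of coordinates whose bit pattern along the tuple is `δ`):
`x_δ = |B_δ| - [n/2^d]` for `δ ≠ (0,…,0)`, and
`x_{(0,…,0)} = |B_{(0,…,0)}| - n + (2^d - 1)[n/2^d]`. -/
noncomputable def xval (n : ℕ) {d : ℕ} (v : Fin d → DV n) (δ : Fin d → Bool) : ℤ :=
  ({i : Fin n | ∀ t, (i ∈ (v t).1 ↔ δ t = true)}.ncard : ℤ) -
    (if δ = fun _ => false then (n : ℤ) - ((2 ^ d - 1) * (n / 2 ^ d) : ℕ)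
     else ((n / 2 ^ d : ℕ) : ℤ))

/-- A spanning subgraph `G'` of the distance graph satisfies `Ext_f^dist(R, H)`:
every `d`-tuple of vertices in `Ṽ_f^d` admits an extension `w¹, …, w^k`. -/
def ExtProp (n : ℕ) {d k : ℕ} (H : SimpleGraph (Fin d ⊕ Fin k)) (f : ℕ → ℝ)
    (G' : SimpleGraph (DV n)) : Prop :=
  ∀ v : Fin d → DV n, (∀ δ : Fin d → Bool, |((xval n v δ : ℤ) : ℝ)| ≤ f n) →
    ∃ w : Fin k → DV n,
      (∀ i j, H.Adj (Sum.inl i) (Sum.inr j) → G'.Adj (v i) (w j)) ∧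
      (∀ i j, H.Adj (Sum.inr i) (Sum.inr j) → G'.Adj (w i) (w j))

/-- `M_{(R,H)}^{x⃗} = M_{(R,H)}(v¹, …, v^d)`: the number of injective maps `V(H) → V`
sending the roots to the `vⁱ` and mapping every edge of `H` with at least one non-root
endpoint to an edge of the distance graph. -/
noncomputable def Mext (n : ℕ) {d k : ℕ} (H : SimpleGraph (Fin d ⊕ Fin k))
    (v : Fin d → DV n) : ℕ :=
  Nat.card {φ : Fin d ⊕ Fin k → DV n // Function.Injective φ ∧
    (∀ i, φ (Sum.inl i) = v i) ∧
    ∀ a b, H.Adj a b → (Sum.isRight a = true ∨ Sum.isRight b = true) →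
      (distGraph n).Adj (φ a) (φ b)}

/-- Number of automorphisms of `H` fixing every root. -/
noncomputable def rootAutCount {d k : ℕ} (H : SimpleGraph (Fin d ⊕ Fin k)) : ℕ :=
  Nat.card {φ : H ≃g H // ∀ i : Fin d, φ (Sum.inl i) = Sum.inl i}

section Aux
open Finset

/-- Counting tuples with independent coordinate conditions. -/
lemma tuple_count (n d : ℕ) (Q : Fin d → DV n → Prop) [∀ t s, Decidable (Q t s)] :
    ((univ : Finset (Fin d → DV n)).filter (fun v => ∀ t, Q t (v t))).card
      = ∏ t, ((univ : Finset (DV n)).filter (Q t)).card := by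
  rw [← Fintype.card_subtype,
    Fintype.card_congr (Equiv.subtypePiEquivPi (p := Q)), Fintype.card_pi]
  exact Finset.prod_congr rfl fun t _ => Fintype.card_subtype _

/-- Transfer counting on `DV n` to counting on `powersetCard`. -/
lemma dv_card_filter (n : ℕ) (Q : Finset (Fin n) → Prop) [DecidablePred Q] :
    ((univ : Finset (DV n)).filter (fun s => Q s.1)).card
      = ((Finset.powersetCard (n / 2) (univ : Finset (Fin n))).filter Q).card := by
  apply Finset.card_bij (fun (s : DV n) _ => s.1)
  · intro a ha
    simp only [mem_filter, Finset.mem_powersetCard_univ]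
    exact ⟨a.2, (mem_filter.mp ha).2⟩
  · intro a _ b _ h; exact Subtype.ext h
  · intro s hs
    simp only [mem_filter, Finset.mem_powersetCard_univ] at hs
    exact ⟨⟨s, hs.1⟩, mem_filter.mpr ⟨mem_univ _, hs.2⟩, rfl⟩

lemma count_notmem (n k : ℕ) (i : Fin n) :
    ((Finset.powersetCard k (univ : Finset (Fin n))).filter (fun s => i ∉ s)).card
      = (n - 1).choose k := by
  have h : (Finset.powersetCard k (univ : Finset (Fin n))).filter (fun s => i ∉ s)
      = Finset.powersetCard k (univ.erase i) := by
    ext s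
    simp only [mem_filter, Finset.mem_powersetCard, Finset.subset_erase]
    tauto
  rw [h, Finset.card_powersetCard, card_erase_of_mem (mem_univ _), card_univ,
    Fintype.card_fin]

lemma count_notmem2 (n k : ℕ) (i j : Fin n) (hij : i ≠ j) :
    ((Finset.powersetCard k (univ : Finset (Fin n))).filter
      (fun s => i ∉ s ∧ j ∉ s)).card = (n - 2).choose k := by
  have h : (Finset.powersetCard k (univ : Finset (Fin n))).filter
        (fun s => i ∉ s ∧ j ∉ s)
      = Finset.powersetCard k ((univ.erase i).erase j) := by
    ext s
    simp only [mem_filter, Finset.mem_powersetCard, Finset.subset_erase]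
    tauto
  rw [h, Finset.card_powersetCard, card_erase_of_mem, card_erase_of_mem (mem_univ _),
    card_univ, Fintype.card_fin]
  · rfl
  · exact Finset.mem_erase.mpr ⟨hij.symm, mem_univ _⟩

lemma choose_central (q : ℕ) (hq : 1 ≤ q) :
    (2 * q).choose q = 2 * (2 * q - 1).choose q := by
  obtain ⟨r, rfl⟩ : ∃ r, q = r + 1 := ⟨q - 1, by omega⟩
  have h1 : 2 * (r + 1) = (2 * r + 1) + 1 := by ring
  have h2 : (2 * r + 1).choose r = (2 * r + 1).choose (r + 1) := by
    have h := Nat.choose_symm (n := 2 * r + 1) (k := r + 1) (by omega)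
    rwa [show 2 * r + 1 - (r + 1) = r by omega] at h
  rw [h1, Nat.choose_succ_succ, h2, show (2 * r + 1) + 1 - 1 = 2 * r + 1 by omega]
  ring

lemma two_b_le_c1 (q : ℕ) (hq : 1 ≤ q) :
    2 * (2 * q - 2).choose q ≤ (2 * q - 1).choose q := by
  obtain ⟨r, rfl⟩ : ∃ r, q = r + 1 := ⟨q - 1, by omega⟩
  have h1 : 2 * (r + 1) - 1 = 2 * r + 1 := by omega
  have h2 : 2 * (r + 1) - 2 = 2 * r := by omega
  rw [h1, h2, Nat.choose_succ_succ]
  simp only [Nat.succ_eq_add_one]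
  have h3 : (2 * r).choose (r + 1) ≤ (2 * r).choose r := by
    have := Nat.choose_le_middle (r + 1) (2 * r)
    rwa [show (2 * r) / 2 = r by omega] at this
  omega

lemma count_mem (n q : ℕ) (hn : n = 2 * q) (hq : 1 ≤ q) (i : Fin n) :
    ((Finset.powersetCard q (univ : Finset (Fin n))).filter (fun s => i ∈ s)).card
      = (n - 1).choose q := by
  have htot : ((Finset.powersetCard q (univ : Finset (Fin n))).filter
        (fun s => i ∈ s)).card
      + ((Finset.powersetCard q (univ : Finset (Fin n))).filter
        (fun s => i ∉ s)).card
      = n.choose q := by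
    rw [Finset.card_filter_add_card_filter_not]
    simp [Finset.card_powersetCard]
  rw [count_notmem] at htot
  have hN : n.choose q = 2 * (n - 1).choose q := by
    rw [hn, choose_central q hq]
  omega

lemma count_mem2 (n q : ℕ) (hn : n = 2 * q) (hq : 1 ≤ q) (i j : Fin n) (hij : i ≠ j) :
    ((Finset.powersetCard q (univ : Finset (Fin n))).filter
      (fun s => i ∈ s ∧ j ∈ s)).card = (n - 2).choose q := by
  set F := Finset.powersetCard q (univ : Finset (Fin n)) with hF
  have htot : (F.filter (fun s => i ∈ s ∧ j ∈ s)).card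
      + (F.filter (fun s => ¬(i ∈ s ∧ j ∈ s))).card = n.choose q := by
    rw [Finset.card_filter_add_card_filter_not, hF]
    simp [Finset.card_powersetCard]
  have hneg : F.filter (fun s => ¬(i ∈ s ∧ j ∈ s))
      = F.filter (fun s => i ∉ s) ∪ F.filter (fun s => j ∉ s) := by
    rw [← Finset.filter_or]
    exact Finset.filter_congr fun s _ => by tauto
  have hinter : F.filter (fun s => i ∉ s) ∩ F.filter (fun s => j ∉ s)
      = F.filter (fun s => i ∉ s ∧ j ∉ s) := (Finset.filter_and _ _ _).symm
  have hcui : (F.filter (fun s => i ∉ s) ∪ F.filter (fun s => j ∉ s)).card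
      + (F.filter (fun s => i ∉ s ∧ j ∉ s)).card
      = (F.filter (fun s => i ∉ s)).card + (F.filter (fun s => j ∉ s)).card := by
    rw [← hinter]; exact Finset.card_union_add_card_inter _ _
  have h1 := count_notmem n q i
  have h2 := count_notmem n q j
  have h3 := count_notmem2 n q i j hij
  rw [← hF] at h1 h2 h3
  have hN : n.choose q = 2 * (n - 1).choose q := by
    rw [hn, choose_central q hq]
  rw [hneg] at htot
  omega

end Aux
section Aux2
open Finset

variable {n q d : ℕ}

lemma filter_single (hn : n = 2 * q) (hq : 1 ≤ q) (b : Bool) (i : Fin n) :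
    ((univ : Finset (DV n)).filter (fun s => i ∈ s.1 ↔ b = true)).card
      = (n - 1).choose q := by
  rw [dv_card_filter n (fun s => i ∈ s ↔ b = true), show n / 2 = q by omega]
  cases b
  · rw [show (Finset.powersetCard q (univ : Finset (Fin n))).filter
        (fun s => i ∈ s ↔ (false = true))
        = (Finset.powersetCard q (univ : Finset (Fin n))).filter (fun s => i ∉ s)
      from Finset.filter_congr fun s _ => by simp]
    exact count_notmem n q i
  · rw [show (Finset.powersetCard q (univ : Finset (Fin n))).filter
        (fun s => i ∈ s ↔ (true = true))
        = (Finset.powersetCard q (univ : Finset (Fin n))).filter (fun s => i ∈ s)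
      from Finset.filter_congr fun s _ => by simp]
    exact count_mem n q hn hq i

lemma filter_pair (hn : n = 2 * q) (hq : 1 ≤ q) (b : Bool) (i j : Fin n) (hij : i ≠ j) :
    ((univ : Finset (DV n)).filter
      (fun s => (i ∈ s.1 ↔ b = true) ∧ (j ∈ s.1 ↔ b = true))).card
      = (n - 2).choose q := by
  rw [dv_card_filter n (fun s => (i ∈ s ↔ b = true) ∧ (j ∈ s ↔ b = true)),
    show n / 2 = q by omega]
  cases b
  · rw [show (Finset.powersetCard q (univ : Finset (Fin n))).filter
        (fun s => (i ∈ s ↔ (false = true)) ∧ (j ∈ s ↔ (false = true)))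
        = (Finset.powersetCard q (univ : Finset (Fin n))).filter
          (fun s => i ∉ s ∧ j ∉ s)
      from Finset.filter_congr fun s _ => by simp]
    exact count_notmem2 n q i j hij
  · rw [show (Finset.powersetCard q (univ : Finset (Fin n))).filter
        (fun s => (i ∈ s ↔ (true = true)) ∧ (j ∈ s ↔ (true = true)))
        = (Finset.powersetCard q (univ : Finset (Fin n))).filter
          (fun s => i ∈ s ∧ j ∈ s)
      from Finset.filter_congr fun s _ => by simp]
    exact count_mem2 n q hn hq i j hij

lemma card_pattern_single (hn : n = 2 * q) (hq : 1 ≤ q) (δ : Fin d → Bool) (i : Fin n) :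
    ((univ : Finset (Fin d → DV n)).filter
      (fun v => ∀ t, (i ∈ (v t).1 ↔ δ t = true))).card
      = ((n - 1).choose q) ^ d := by
  rw [tuple_count n d (fun t s => i ∈ s.1 ↔ δ t = true),
    Finset.prod_congr rfl (fun t _ => filter_single hn hq (δ t) i)]
  simp

lemma card_pattern_pair (hn : n = 2 * q) (hq : 1 ≤ q) (δ : Fin d → Bool)
    (i j : Fin n) (hij : i ≠ j) :
    ((univ : Finset (Fin d → DV n)).filter
      (fun v => ∀ t, ((i ∈ (v t).1 ↔ δ t = true) ∧ (j ∈ (v t).1 ↔ δ t = true)))).card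
      = ((n - 2).choose q) ^ d := by
  rw [tuple_count n d (fun t s => (i ∈ s.1 ↔ δ t = true) ∧ (j ∈ s.1 ↔ δ t = true)),
    Finset.prod_congr rfl (fun t _ => filter_pair hn hq (δ t) i j hij)]
  simp

/-- `S_δ(v) = |B_δ|`, the number of coordinates with bit pattern `δ`. -/
def Sc (n d : ℕ) (δ : Fin d → Bool) (v : Fin d → DV n) : ℕ :=
  ((univ : Finset (Fin n)).filter (fun i => ∀ t, (i ∈ (v t).1 ↔ δ t = true))).card

lemma sum_Sc (hn : n = 2 * q) (hq : 1 ≤ q) (δ : Fin d → Bool) :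
    ∑ v : Fin d → DV n, Sc n d δ v = n * ((n - 1).choose q) ^ d := by
  unfold Sc
  rw [Finset.sum_congr rfl (fun v _ => Finset.card_filter _ _), Finset.sum_comm,
    Finset.sum_congr rfl (fun i _ => (Finset.card_filter _ _).symm),
    Finset.sum_congr rfl (fun i _ => card_pattern_single hn hq δ i)]
  simp [mul_comm]

lemma sum_Sc_sq (hn : n = 2 * q) (hq : 1 ≤ q) (δ : Fin d → Bool) :
    ∑ v : Fin d → DV n, (Sc n d δ v) ^ 2
      = n * ((n - 1).choose q) ^ d + n * (n - 1) * ((n - 2).choose q) ^ d := by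
  have e1 : ∀ v : Fin d → DV n, (Sc n d δ v) ^ 2
      = ∑ i : Fin n, ∑ j : Fin n,
          if (∀ t, (i ∈ (v t).1 ↔ δ t = true)) ∧ (∀ t, (j ∈ (v t).1 ↔ δ t = true))
          then 1 else 0 := by
    intro v
    rw [Sc, Finset.card_filter, sq, Finset.sum_mul_sum]
    exact Finset.sum_congr rfl fun i _ => Finset.sum_congr rfl fun j _ => by
      by_cases h1 : (∀ t, (i ∈ (v t).1 ↔ δ t = true)) <;>
        by_cases h2 : (∀ t, (j ∈ (v t).1 ↔ δ t = true)) <;> simp [h1, h2]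
  rw [Finset.sum_congr rfl fun v _ => e1 v, Finset.sum_comm,
    Finset.sum_congr rfl fun i _ => Finset.sum_comm]
  have e2 : ∀ i j : Fin n,
      (∑ v : Fin d → DV n,
        if (∀ t, (i ∈ (v t).1 ↔ δ t = true)) ∧ (∀ t, (j ∈ (v t).1 ↔ δ t = true))
        then 1 else 0)
      = if i = j then ((n - 1).choose q) ^ d else ((n - 2).choose q) ^ d := by
    intro i j
    rw [← Finset.card_filter]
    by_cases hij : i = j
    · subst hij
      rw [if_pos rfl, ← card_pattern_single hn hq δ i]
      exact congrArg Finset.card (Finset.filter_congr fun v _ =>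
        ⟨fun h => h.1, fun h => ⟨h, h⟩⟩)
    · rw [if_neg hij, ← card_pattern_pair hn hq δ i j hij]
      exact congrArg Finset.card (Finset.filter_congr fun v _ => by
        constructor
        · rintro ⟨h1, h2⟩ t; exact ⟨h1 t, h2 t⟩
        · intro h; exact ⟨fun t => (h t).1, fun t => (h t).2⟩)
  rw [Finset.sum_congr rfl fun i _ => Finset.sum_congr rfl fun j _ => e2 i j]
  have e3 : ∀ i : Fin n,
      (∑ j : Fin n, if i = j then ((n - 1).choose q) ^ d else ((n - 2).choose q) ^ d)
      = ((n - 1).choose q) ^ d + (n - 1) * ((n - 2).choose q) ^ d := by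
    intro i
    rw [Finset.sum_ite, Finset.sum_const, Finset.sum_const]
    have c1 : (univ.filter (fun j : Fin n => i = j)).card = 1 := by
      rw [Finset.filter_eq]; simp
    have c2 : (univ.filter (fun j : Fin n => ¬ i = j)).card = n - 1 := by
      have := Finset.card_filter_add_card_filter_not
        (s := (univ : Finset (Fin n))) (p := fun j => i = j)
      simp only [card_univ, Fintype.card_fin] at this
      omega
    rw [c1, c2]; simp [mul_comm]
  rw [Finset.sum_congr rfl fun i _ => e3 i]
  rw [Finset.sum_add_distrib]
  simp [Finset.sum_const, mul_comm, mul_assoc, mul_left_comm]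

lemma card_dv (n : ℕ) : Fintype.card (DV n) = NN n := by
  rw [← Nat.card_eq_fintype_card]
  have h : Nat.card (DV n) = Nat.card {s : Finset (Fin n) // s.card = n / 2} := rfl
  rw [h, Nat.card_eq_fintype_card, Fintype.card_finset_len, Fintype.card_fin]
  rfl

lemma card_tuples (n d : ℕ) : Fintype.card (Fin d → DV n) = (NN n) ^ d := by
  simp [card_dv]

end Aux2
section Aux3
open Finset

variable {n q d : ℕ}

lemma NN_pos (n : ℕ) : 0 < NN n := Nat.choose_pos (Nat.div_le_self _ _)

lemma var_bound (hn : n = 2 * q) (hq : 1 ≤ q) (δ : Fin d → Bool) :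
    ∑ v : Fin d → DV n, ((Sc n d δ v : ℝ) - n / 2 ^ d) ^ 2
      ≤ n * (NN n : ℝ) ^ d := by
  have hq1 : 1 ≤ q := hq
  set μ : ℝ := (n : ℝ) / 2 ^ d with hμdef
  have hE : (0:ℝ) < 2 ^ d := by positivity
  have expand : ∑ v : Fin d → DV n, ((Sc n d δ v : ℝ) - μ) ^ 2
      = (∑ v : Fin d → DV n, (Sc n d δ v : ℝ) ^ 2)
        - 2 * μ * (∑ v : Fin d → DV n, (Sc n d δ v : ℝ))
        + (Fintype.card (Fin d → DV n) : ℝ) * μ ^ 2 := by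
    rw [Finset.sum_congr rfl (fun v _ => (by ring :
        ((Sc n d δ v : ℝ) - μ) ^ 2
          = (Sc n d δ v : ℝ) ^ 2 - 2 * μ * (Sc n d δ v : ℝ) + μ ^ 2)),
      Finset.sum_add_distrib, Finset.sum_sub_distrib, ← Finset.mul_sum,
      Finset.sum_const, card_univ, nsmul_eq_mul]
  have hS : (∑ v : Fin d → DV n, (Sc n d δ v : ℝ))
      = (n : ℝ) * (((n - 1).choose q : ℕ) : ℝ) ^ d := by
    rw [← Nat.cast_sum, sum_Sc hn hq1 δ]; push_cast; ring
  have hS2 : (∑ v : Fin d → DV n, (Sc n d δ v : ℝ) ^ 2)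
      = (n : ℝ) * (((n - 1).choose q : ℕ) : ℝ) ^ d
        + (n : ℝ) * (((n - 1 : ℕ) : ℕ) : ℝ) * (((n - 2).choose q : ℕ) : ℝ) ^ d := by
    have : (∑ v : Fin d → DV n, (Sc n d δ v : ℝ) ^ 2)
        = ((∑ v : Fin d → DV n, (Sc n d δ v) ^ 2 : ℕ) : ℝ) := by push_cast; rfl
    rw [this, sum_Sc_sq hn hq1 δ]; push_cast; ring
  have hcard : (Fintype.card (Fin d → DV n) : ℝ) = ((NN n : ℕ) : ℝ) ^ d := by
    rw [card_tuples]; push_cast; ring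
  have hBC : 2 * (((n - 2).choose q : ℕ) : ℝ) ≤ (((n - 1).choose q : ℕ) : ℝ) := by
    have h := two_b_le_c1 q hq1
    rw [show 2 * q - 2 = n - 2 by omega, show 2 * q - 1 = n - 1 by omega] at h
    exact_mod_cast h
  have hNC : ((NN n : ℕ) : ℝ) = 2 * (((n - 1).choose q : ℕ) : ℝ) := by
    have h := choose_central q hq1
    rw [show 2 * q - 1 = n - 1 by omega] at h
    rw [← hn] at h
    have h2 : NN n = 2 * (n - 1).choose q := by
      unfold NN; rw [show n / 2 = q by omega]; exact h
    rw [h2]; push_cast; ring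
  set C1 : ℝ := (((n - 1).choose q : ℕ) : ℝ) with hC1
  set B : ℝ := (((n - 2).choose q : ℕ) : ℝ) with hB
  rw [expand, hS, hS2, hcard, hNC]
  set X : ℝ := C1 ^ d with hX
  set Y : ℝ := B ^ d with hY
  set E : ℝ := (2 : ℝ) ^ d with hEdef
  have hmul : (2 * C1) ^ d = E * X := by rw [hEdef, hX, mul_pow]
  rw [hmul]
  have hXpos : 0 ≤ X := by positivity
  have hYpos : 0 ≤ Y := by positivity
  have hYX : E * Y ≤ X := by
    have h0 : (0:ℝ) ≤ 2 * B := by positivity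
    have := pow_le_pow_left₀ h0 hBC d
    rwa [mul_pow, ← hEdef, ← hY, ← hX] at this
  have hμE : μ * E = n := by rw [hμdef]; field_simp
  have hμ0 : 0 ≤ μ := by positivity
  have hE1 : 1 ≤ E := by rw [hEdef]; exact one_le_pow₀ (by norm_num)
  have hm1 : (((n - 1 : ℕ) : ℕ) : ℝ) ≤ (n : ℝ) := by exact_mod_cast Nat.sub_le n 1
  have hm0 : (0:ℝ) ≤ (((n - 1 : ℕ) : ℕ) : ℝ) := Nat.cast_nonneg _
  have hnn : (0:ℝ) ≤ (n : ℝ) := Nat.cast_nonneg _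
  set m1 : ℝ := (((n - 1 : ℕ) : ℕ) : ℝ)
  have k1 : (n : ℝ) * m1 * Y ≤ (n : ℝ) * (n : ℝ) * Y :=
    mul_le_mul_of_nonneg_right (mul_le_mul_of_nonneg_left hm1 hnn) hYpos
  have k2 : (n : ℝ) * (n : ℝ) * Y = μ * (E * Y) * (n : ℝ) := by
    rw [← hμE]; ring
  have k3 : μ * (E * Y) * (n : ℝ) ≤ μ * X * (n : ℝ) :=
    mul_le_mul_of_nonneg_right (mul_le_mul_of_nonneg_left hYX hμ0) hnn
  have k4 : μ * X * (n : ℝ) = E * X * μ ^ 2 := by rw [← hμE]; ring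
  have k5 : (n : ℝ) * X ≤ (n : ℝ) * (E * X) :=
    mul_le_mul_of_nonneg_left (le_mul_of_one_le_left hXpos hE1) hnn
  have k6 : 2 * μ * ((n : ℝ) * X) = 2 * (E * X * μ ^ 2) := by rw [← hμE]; ring
  linarith
end Aux3

section Aux4
open Finset

lemma cheb {α : Type} [Fintype α] (X : α → ℝ) (μ g : ℝ) (hg : 0 < g)
    [DecidablePred fun v : α => g < |X v - μ|] :
    (((univ : Finset α).filter (fun v => g < |X v - μ|)).card : ℝ) * g ^ 2
      ≤ ∑ v : α, (X v - μ) ^ 2 := by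
  have h1 : (((univ : Finset α).filter (fun v => g < |X v - μ|)).card : ℝ) * g ^ 2
      = ∑ _v ∈ (univ : Finset α).filter (fun v => g < |X v - μ|), g ^ 2 := by
    rw [Finset.sum_const, nsmul_eq_mul]
  rw [h1]
  refine le_trans (Finset.sum_le_sum ?_)
    (Finset.sum_le_sum_of_subset_of_nonneg (filter_subset _ _)
      (fun i _ _ => sq_nonneg _))
  intro i hi
  have h2 : g ≤ |X i - μ| := le_of_lt (mem_filter.mp hi).2
  calc g ^ 2 ≤ |X i - μ| ^ 2 := by nlinarith [abs_nonneg (X i - μ)]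
    _ = (X i - μ) ^ 2 := sq_abs _

lemma xval_eq (n d : ℕ) (v : Fin d → DV n) (δ : Fin d → Bool) :
    xval n v δ = (Sc n d δ v : ℤ) -
      (if δ = fun _ => false then (n : ℤ) - ((2 ^ d - 1) * (n / 2 ^ d) : ℕ)
       else ((n / 2 ^ d : ℕ) : ℤ)) := by
  unfold xval
  congr 1
  have h : {i : Fin n | ∀ t, (i ∈ (v t).1 ↔ δ t = true)}
      = (((univ : Finset (Fin n)).filter
          (fun i => ∀ t, (i ∈ (v t).1 ↔ δ t = true))) : Finset (Fin n)) := by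
    ext i; simp
  rw [h, Set.ncard_coe_finset]
  rfl

lemma xval_bound (n d : ℕ) (v : Fin d → DV n) (δ : Fin d → Bool) (g : ℝ)
    (h : |(Sc n d δ v : ℝ) - n / 2 ^ d| ≤ g) :
    |((xval n v δ : ℤ) : ℝ)| ≤ g + 2 ^ d := by
  have hE : (0:ℝ) < 2 ^ d := by positivity
  have hE1 : (1:ℝ) ≤ 2 ^ d := one_le_pow₀ (by norm_num)
  have hmod : 2 ^ d * (n / 2 ^ d) + n % 2 ^ d = n := Nat.div_add_mod n (2 ^ d)
  have hlt : n % 2 ^ d < 2 ^ d := Nat.mod_lt n (by positivity)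
  have hnF : (n : ℝ) = 2 ^ d * ((n / 2 ^ d : ℕ) : ℝ) + ((n % 2 ^ d : ℕ) : ℝ) := by
    exact_mod_cast hmod.symm
  have hr0 : (0:ℝ) ≤ ((n % 2 ^ d : ℕ) : ℝ) := Nat.cast_nonneg _
  have hr1 : ((n % 2 ^ d : ℕ) : ℝ) < 2 ^ d := by exact_mod_cast hlt
  have hcast : ((xval n v δ : ℤ) : ℝ) = (Sc n d δ v : ℝ) -
      (if δ = fun _ => false then (n : ℝ) - (((2 ^ d - 1) * (n / 2 ^ d) : ℕ) : ℝ)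
       else ((n / 2 ^ d : ℕ) : ℝ)) := by
    rw [xval_eq n d v δ]
    by_cases hδ : δ = fun _ => false
    · rw [if_pos hδ, if_pos hδ]
      simp only [Int.cast_sub, Int.cast_natCast]
    · rw [if_neg hδ, if_neg hδ]
      simp only [Int.cast_sub, Int.cast_natCast]
  have hmain : |(n : ℝ) / 2 ^ d -
      (if δ = fun _ => false then (n : ℝ) - (((2 ^ d - 1) * (n / 2 ^ d) : ℕ) : ℝ)
       else ((n / 2 ^ d : ℕ) : ℝ))| ≤ 2 ^ d := by
    by_cases hδ : δ = fun _ => false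
    · rw [if_pos hδ]
      have hc2 : (((2 ^ d - 1) * (n / 2 ^ d) : ℕ) : ℝ)
          = (2 ^ d - 1) * ((n / 2 ^ d : ℕ) : ℝ) := by
        push_cast [Nat.cast_sub (Nat.one_le_two_pow)]
        ring
      have h2 : (n : ℝ) / 2 ^ d - ((n : ℝ) - (((2 ^ d - 1) * (n / 2 ^ d) : ℕ) : ℝ))
          = (((n % 2 ^ d : ℕ) : ℝ) * (1 - 2 ^ d)) / 2 ^ d := by
        rw [hc2]
        rw [show (n:ℝ) / 2 ^ d = (2 ^ d * ((n / 2 ^ d : ℕ) : ℝ)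
          + ((n % 2 ^ d : ℕ) : ℝ)) / 2 ^ d by rw [← hnF]]
        rw [show (n:ℝ) = 2 ^ d * ((n / 2 ^ d : ℕ) : ℝ) + ((n % 2 ^ d : ℕ) : ℝ) from hnF]
        field_simp
        ring
      rw [h2, abs_le]
      constructor
      · rw [le_div_iff₀ hE]
        nlinarith [mul_le_mul_of_nonneg_right (le_of_lt hr1) (le_of_lt hE)]
      · rw [div_le_iff₀ hE]
        nlinarith [mul_nonneg hr0 (sub_nonneg.mpr hE1)]
    · rw [if_neg hδ]
      have h1 : (n : ℝ) / 2 ^ d - ((n / 2 ^ d : ℕ) : ℝ)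
          = ((n % 2 ^ d : ℕ) : ℝ) / 2 ^ d := by
        rw [show (n:ℝ) = 2 ^ d * ((n / 2 ^ d : ℕ) : ℝ) + ((n % 2 ^ d : ℕ) : ℝ) from hnF]
        field_simp
        ring
      rw [h1, abs_of_nonneg (by positivity), div_le_iff₀ hE]
      nlinarith
  calc |((xval n v δ : ℤ) : ℝ)|
      = |(Sc n d δ v : ℝ) - (n : ℝ) / 2 ^ d + ((n : ℝ) / 2 ^ d -
        (if δ = fun _ => false then (n : ℝ) - (((2 ^ d - 1) * (n / 2 ^ d) : ℕ) : ℝ)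
         else ((n / 2 ^ d : ℕ) : ℝ)))| := by rw [hcast]; ring_nf
    _ ≤ |(Sc n d δ v : ℝ) - (n : ℝ) / 2 ^ d| + |(n : ℝ) / 2 ^ d -
        (if δ = fun _ => false then (n : ℝ) - (((2 ^ d - 1) * (n / 2 ^ d) : ℕ) : ℝ)
         else ((n / 2 ^ d : ℕ) : ℝ))| := abs_add_le _ _
    _ ≤ g + 2 ^ d := add_le_add h hmain

end Aux4
section Aux5
open Finset
open scoped Classical

lemma main_bound (d : ℕ) (f : ℕ → ℝ) (n q : ℕ) (hn : n = 2 * q) (hq : 1 ≤ q)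
    (g : ℝ) (hg : 0 < g) (hgf : g + 2 ^ d ≤ f n) :
    (1 - (2 ^ d : ℝ) * (n : ℝ) / g ^ 2) * (NN n : ℝ) ^ d
        ≤ (Nat.card {v : Fin d → DV n //
            ∀ δ : Fin d → Bool, |((xval n v δ : ℤ) : ℝ)| ≤ f n} : ℝ) ∧
    (Nat.card {v : Fin d → DV n //
        ∀ δ : Fin d → Bool, |((xval n v δ : ℤ) : ℝ)| ≤ f n} : ℝ) ≤ (NN n : ℝ) ^ d := by
  set p : (Fin d → DV n) → Prop :=
    fun v => ∀ δ : Fin d → Bool, |((xval n v δ : ℤ) : ℝ)| ≤ f n with hp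
  have hNat : (Nat.card {v : Fin d → DV n // p v} : ℕ)
      = ((univ : Finset (Fin d → DV n)).filter p).card := by
    rw [Nat.card_eq_fintype_card, Fintype.card_subtype]
  have hsplit : ((univ : Finset (Fin d → DV n)).filter p).card
      + ((univ : Finset (Fin d → DV n)).filter (fun v => ¬ p v)).card
      = (NN n) ^ d := by
    rw [Finset.card_filter_add_card_filter_not, card_univ, card_tuples]
  have hchb : ∀ δ : Fin d → Bool,
      ((((univ : Finset (Fin d → DV n)).filter
        (fun v => g < |(Sc n d δ v : ℝ) - (n : ℝ) / 2 ^ d|)).card : ℝ))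
        ≤ (n : ℝ) * (NN n : ℝ) ^ d / g ^ 2 := by
    intro δ
    rw [le_div_iff₀ (by positivity)]
    exact le_trans (cheb (fun v => (Sc n d δ v : ℝ)) ((n : ℝ) / 2 ^ d) g hg)
      (var_bound hn hq δ)
  have hsub : (univ : Finset (Fin d → DV n)).filter (fun v => ¬ p v)
      ⊆ (univ : Finset (Fin d → Bool)).biUnion (fun δ =>
          (univ : Finset (Fin d → DV n)).filter
            (fun v => g < |(Sc n d δ v : ℝ) - (n : ℝ) / 2 ^ d|)) := by
    intro v hv
    have hnp : ¬ p v := (mem_filter.mp hv).2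
    simp only [hp] at hnp
    push_neg at hnp
    obtain ⟨δ, hδ⟩ := hnp
    refine Finset.mem_biUnion.mpr ⟨δ, mem_univ _, mem_filter.mpr ⟨mem_univ _, ?_⟩⟩
    by_contra hle
    push_neg at hle
    exact absurd (le_trans (xval_bound n d v δ g hle) hgf) (not_le.mpr hδ)
  have hbad : ((((univ : Finset (Fin d → DV n)).filter (fun v => ¬ p v)).card : ℝ))
      ≤ (2 ^ d : ℝ) * ((n : ℝ) * (NN n : ℝ) ^ d / g ^ 2) := by
    calc ((((univ : Finset (Fin d → DV n)).filter (fun v => ¬ p v)).card : ℝ))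
        ≤ ((((univ : Finset (Fin d → Bool)).biUnion (fun δ =>
            (univ : Finset (Fin d → DV n)).filter
              (fun v => g < |(Sc n d δ v : ℝ) - (n : ℝ) / 2 ^ d|))).card : ℝ)) := by
          exact_mod_cast Finset.card_le_card hsub
      _ ≤ ∑ δ : Fin d → Bool,
            ((((univ : Finset (Fin d → DV n)).filter
              (fun v => g < |(Sc n d δ v : ℝ) - (n : ℝ) / 2 ^ d|)).card : ℝ)) := by
          exact_mod_cast Finset.card_biUnion_le
      _ ≤ ∑ _δ : Fin d → Bool, (n : ℝ) * (NN n : ℝ) ^ d / g ^ 2 :=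
          Finset.sum_le_sum fun δ _ => hchb δ
      _ = (2 ^ d : ℝ) * ((n : ℝ) * (NN n : ℝ) ^ d / g ^ 2) := by
          rw [Finset.sum_const, nsmul_eq_mul, card_univ]
          norm_num [Fintype.card_fun]
  have hgood : ((Nat.card {v : Fin d → DV n // p v} : ℕ) : ℝ)
      + ((((univ : Finset (Fin d → DV n)).filter (fun v => ¬ p v)).card : ℝ))
      = (NN n : ℝ) ^ d := by
    rw [hNat]
    exact_mod_cast congrArg (Nat.cast (R := ℝ)) hsplit
  constructor
  · have : (1 - (2 ^ d : ℝ) * (n : ℝ) / g ^ 2) * (NN n : ℝ) ^ d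
        = (NN n : ℝ) ^ d - (2 ^ d : ℝ) * ((n : ℝ) * (NN n : ℝ) ^ d / g ^ 2) := by
      field_simp
    rw [this]
    linarith
  · have h0 : (0:ℝ) ≤ ((((univ : Finset (Fin d → DV n)).filter
        (fun v => ¬ p v)).card : ℝ)) := Nat.cast_nonneg _
    linarith

end Aux5
/-- `|Ṽ_f^d| ~ N^d`: the number of `d`-tuples of vertices with
`|x_j| ≤ f(n)` for all `j` is asymptotically `N^d`, provided `n^{0.6} ≤ f(n) = o(n^{2/3})`. -/
theorem stmt15 (d : ℕ) (hd : 1 ≤ d) (f : ℕ → ℝ)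
    (hf1 : ∀ n : ℕ, (n : ℝ) ^ (0.6 : ℝ) ≤ f n)
    (hf2 : f =o[atTop] fun n => (n : ℝ) ^ ((2 : ℝ) / 3)) :
    Tendsto (fun m =>
        (Nat.card {v : Fin d → DV (4 * m) //
            ∀ δ : Fin d → Bool, |((xval (4 * m) v δ : ℤ) : ℝ)| ≤ f (4 * m)} : ℝ) /
        (NN (4 * m) : ℝ) ^ d)
      atTop (nhds 1) := by
  have h4 : Tendsto (fun m : ℕ => ((4 * m : ℕ) : ℝ)) atTop atTop :=
    tendsto_natCast_atTop_atTop.comp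
      (tendsto_atTop_mono (fun m => by simp only [id_eq]; omega) tendsto_id)
  have hL : Tendsto (fun m : ℕ => 1 - (2:ℝ) ^ (d + 2) * ((4 * m : ℕ) : ℝ) ^ (-(1/5 : ℝ)))
      atTop (nhds 1) := by
    have h5 := (tendsto_rpow_neg_atTop (by norm_num : (0:ℝ) < 1/5)).comp h4
    have h6 := h5.const_mul ((2:ℝ) ^ (d + 2))
    have h7 : Tendsto (fun _ : ℕ => (1:ℝ)) atTop (nhds 1) := tendsto_const_nhds
    simpa using h7.sub h6
  have hev1 : ∀ᶠ m : ℕ in atTop, (2:ℝ) ^ (d + 1) ≤ ((4 * m : ℕ) : ℝ) ^ (0.6 : ℝ) := by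
    have := (tendsto_rpow_atTop (by norm_num : (0:ℝ) < 0.6)).comp h4
    exact this.eventually_ge_atTop _
  have hev2 : ∀ᶠ m : ℕ in atTop, 1 ≤ m := eventually_ge_atTop 1
  have setup : ∀ m : ℕ, 1 ≤ m → (2:ℝ) ^ (d + 1) ≤ ((4 * m : ℕ) : ℝ) ^ (0.6 : ℝ) →
      (1 - (2:ℝ) ^ (d + 2) * ((4 * m : ℕ) : ℝ) ^ (-(1/5 : ℝ))
        ≤ (Nat.card {v : Fin d → DV (4 * m) //
            ∀ δ : Fin d → Bool, |((xval (4 * m) v δ : ℤ) : ℝ)| ≤ f (4 * m)} : ℝ) /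
          (NN (4 * m) : ℝ) ^ d) ∧
      ((Nat.card {v : Fin d → DV (4 * m) //
            ∀ δ : Fin d → Bool, |((xval (4 * m) v δ : ℤ) : ℝ)| ≤ f (4 * m)} : ℝ) /
          (NN (4 * m) : ℝ) ^ d ≤ 1) := by
    intro m hm h1
    set nR : ℝ := ((4 * m : ℕ) : ℝ) with hnR
    have hpos : (0:ℝ) < nR := by
      rw [hnR]
      have : (4:ℝ) ≤ ((4 * m : ℕ) : ℝ) := by exact_mod_cast (by omega : 4 ≤ 4 * m)
      linarith
    have h2d : (2:ℝ) ^ d ≤ nR ^ (0.6:ℝ) / 2 := by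
      rw [pow_succ] at h1; linarith
    have hfl : nR ^ (0.6:ℝ) ≤ f (4 * m) := hf1 (4 * m)
    have hrp : (0:ℝ) < nR ^ (0.6:ℝ) := Real.rpow_pos_of_pos hpos _
    set g : ℝ := f (4 * m) - 2 ^ d with hgdef
    have hghalf : nR ^ (0.6:ℝ) / 2 ≤ g := by rw [hgdef]; linarith
    have hg : 0 < g := lt_of_lt_of_le (by linarith) hghalf
    have hgf : g + 2 ^ d ≤ f (4 * m) := le_of_eq (by rw [hgdef]; ring)
    obtain ⟨hlow, hup⟩ := main_bound d f (4 * m) (2 * m) (by ring) (by omega) g hg hgf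
    have hN : (0:ℝ) < (NN (4 * m) : ℝ) := by exact_mod_cast NN_pos (4 * m)
    have hNd : (0:ℝ) < (NN (4 * m) : ℝ) ^ d := pow_pos hN d
    constructor
    · have step1 : 1 - (2:ℝ) ^ d * nR / g ^ 2
          ≤ (Nat.card {v : Fin d → DV (4 * m) //
              ∀ δ : Fin d → Bool, |((xval (4 * m) v δ : ℤ) : ℝ)| ≤ f (4 * m)} : ℝ) /
            (NN (4 * m) : ℝ) ^ d := by
        rw [le_div_iff₀ hNd]
        exact hlow
      have hsq : (nR ^ (0.6:ℝ)) ^ 2 = nR ^ ((6:ℝ)/5) := by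
        rw [← Real.rpow_natCast (nR ^ (0.6:ℝ)) 2, ← Real.rpow_mul hpos.le]
        norm_num
      have hg2 : nR ^ ((6:ℝ)/5) / 4 ≤ g ^ 2 := by
        have h8 : (nR ^ (0.6:ℝ) / 2) ^ 2 ≤ g ^ 2 := by
          apply pow_le_pow_left₀ (by positivity) hghalf
        calc nR ^ ((6:ℝ)/5) / 4 = (nR ^ (0.6:ℝ) / 2) ^ 2 := by
              rw [div_pow, hsq]; norm_num
          _ ≤ g ^ 2 := h8
      have h65 : (0:ℝ) < nR ^ ((6:ℝ)/5) := Real.rpow_pos_of_pos hpos _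
      have key : (2:ℝ) ^ d * nR / g ^ 2 ≤ 2 ^ (d + 2) * nR ^ (-(1/5:ℝ)) := by
        calc (2:ℝ) ^ d * nR / g ^ 2 ≤ 2 ^ d * nR / (nR ^ ((6:ℝ)/5) / 4) := by
              gcongr <;> first | positivity | exact hg2
          _ = 2 ^ (d + 2) * (nR / nR ^ ((6:ℝ)/5)) := by
              rw [pow_add]
              field_simp
              ring
          _ = 2 ^ (d + 2) * nR ^ (-(1/5:ℝ)) := by
              rw [show nR ^ (-(1/5:ℝ)) = nR ^ ((1:ℝ) - (6:ℝ)/5) by norm_num,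
                Real.rpow_sub hpos, Real.rpow_one]
      linarith
    · rw [div_le_one hNd]
      exact hup
  have hone : Tendsto (fun _ : ℕ => (1:ℝ)) atTop (nhds 1) := tendsto_const_nhds
  apply tendsto_of_tendsto_of_tendsto_of_le_of_le' hL hone
  · filter_upwards [hev1, hev2] with m h1 hm
    exact (setup m hm h1).1
  · filter_upwards [hev1, hev2] with m h1 hm
    exact (setup m hm h1).2
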